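/- In FDM, a buyer i outside the critical ancestors (Group 4) whose winner c_w is not her strong critical ancestor cannot gain by misreporting: to win she must report v'_i > v^{1st}_N, but then she pays v^{1st}_{N_{-i}} ≥ v^{1st}_N restricted appropriately, which exceeds her true valuation v_i < v^{1st}_N, yielding negative utility. -/

import Mathlib

/-- The set of buyers still connected to the seller `s` after removing the set `D`:
vertices `y ≠ s`, `y ∉ D`, admitting a walk from `s` avoiding `D`. -/
def remConn {V : Type*} (G : SimpleGraph V) (s : V) (D : Set V) : Set V :=
  {y | y ≠ s ∧ y ∉ D ∧ ∃ p : G.Walk s y, ∀ d ∈ D, d ∉ p.support}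

/-- The highest reported valuation among buyers still connected to `s` after removing `D`
(`0` if there are none). -/
noncomputable def v1 {V : Type*} (G : SimpleGraph V) (s : V) (v : V → ℝ) (D : Set V) : ℝ :=
  sSup (insert 0 (v '' remConn G s D))

/-- `D` is a cut set of buyer `i`: every walk from the seller `s` to `i` meets `D`. -/
def isCutSet {V : Type*} (G : SimpleGraph V) (s i : V) (D : Set V) : Prop :=
  ∀ p : G.Walk s i, ∃ d ∈ D, d ∈ p.support

/-- `j` is a strong critical ancestor of `i`: `j` is a buyer distinct from `i`
lying on every walk from the seller `s` to `i`. -/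
def isSCA {V : Type*} (G : SimpleGraph V) (s i j : V) : Prop :=
  j ≠ i ∧ j ≠ s ∧ ∀ p : G.Walk s i, j ∈ p.support

/-- The critical descendant set of `x`: buyers `y` such that every walk from `s` to `y`
passes through `x`, together with `x` itself. -/
def critDesc {V : Type*} (G : SimpleGraph V) (s x : V) : Set V :=
  {y | ∀ p : G.Walk s y, x ∈ p.support} ∪ {x}

theorem le_v1_of_mem_remConn {V : Type*} [Finite V] {G : SimpleGraph V} {s y : V}
    {D : Set V} (v : V → ℝ) (hy : y ∈ remConn G s D) : v y ≤ v1 G s v D :=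
  le_csSup (Set.toFinite _).bddAbove (Set.mem_insert_of_mem 0 ⟨y, hy, rfl⟩)

/-- A buyer `i` outside the winner's critical ancestors cannot gain by overbidding to
win: her true valuation is below the top truthful bid `v1_{N_{-∅}}`, the original highest
bidder `h` remains connected without `i`, and the other reports are unchanged, so her
payment `v1` (over buyers connected without her, under the deviating reports `v'`) is at
least `v1_{N_{-∅}}`, yielding strictly negative utility. -/
theorem group4_overbid_negative_utility {V : Type*} [Fintype V]
    (G : SimpleGraph V) (s : V) (v v' : V → ℝ) (i h : V)
    (hvv : ∀ j, j ≠ i → v j = v' j)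
    (hh : h ∈ remConn G s {i})
    (hhmax : v h = v1 G s v (∅ : Set V))
    (hvi : v i < v1 G s v (∅ : Set V)) :
    v i - v1 G s v' {i} < 0 := by
  have h_ne_i : h ≠ i := hh.2.1
  have hpay : v1 G s v (∅ : Set V) ≤ v1 G s v' {i} :=
    calc v1 G s v ∅ = v h := hhmax.symm
      _ = v' h := hvv h h_ne_i
      _ ≤ v1 G s v' {i} := le_v1_of_mem_remConn v' hh
  exact sub_neg.mpr (hvi.trans_le hpay)
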